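/- Let Γ be a torsion-free abelian group, E a Γ-graded division ring whose degree-0 component E₀ is contained in the center of E, n > 1, and δ ∈ Γ such that the order of δ + Γ_E in Γ/Γ_E is greater than 3n (possibly infinite). Let S = Mₙ(E)(δ̄) with δ̄ = (0, δ, 2δ, …, (n−1)δ). Then the commutator subgroup of the group of homogeneous units of S consists exactly of the scalar matrices with entries in the commutator subgroup of E_h*: [S_h*, S_h*] = {c·𝕀ₙ : c ∈ [E_h*, E_h*]}. -/

import Mathlib

set_option maxHeartbeats 1000000

/-- The degree-`lam` homogeneous component of the matrix ring `Mₙ(E)(δ̄)` over a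
`Γ`-graded ring `E`, with the grading shifted by `δ̄`. -/
def MatrixGrade {Γ E : Type*} [AddCommGroup Γ] [Ring E] (𝒜 : Γ → AddSubgroup E)
    {ι : Type*} (δ : ι → Γ) (lam : Γ) : Set (Matrix ι ι E) :=
  {A | ∀ i j, A i j ∈ 𝒜 (lam + δ j - δ i)}

/-!
A homogeneous unit of `Mₙ(E)(0, δ, …, (n-1)δ)` of degree `λ` has its `(i, j)` entry in
`E_{λ + (j - i)δ}`. The quotient of two nonzero entries is a nonzero homogeneous element of
degree `mδ` with `m = (j - i) - (j' - i')`, `|m| < 2n`, so the order hypothesis forces `m = 0`: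
all nonzero entries lie on one diagonal `j - i = k`, and row `0` and column `0` of an
invertible matrix force `k = 0`. Hence the homogeneous units are the diagonal matrices whose
entries are units of one degree `λ`. Any two such entries differ by a factor in `E₀ ⊆ Z(E)`,
which a commutator does not see, so the commutator of two homogeneous units is the scalar
matrix of the commutator of their `(0, 0)` entries.
-/

open scoped commutatorElement

section Commutator

variable {G : Type*} [Group G] {z : G}

theorem commutatorElement_mul_left_of_mem_center (hz : z ∈ Subgroup.center G) (a b : G) :
    ⁅z * a, b⁆ = ⁅a, b⁆ := by
  rw [commutatorElement_def, commutatorElement_def]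
  calc z * a * b * (z * a)⁻¹ * b⁻¹ = z * (a * b * a⁻¹) * z⁻¹ * b⁻¹ := by group
    _ = a * b * a⁻¹ * z * z⁻¹ * b⁻¹ := by rw [← Subgroup.mem_center_iff.mp hz]
    _ = a * b * a⁻¹ * b⁻¹ := by group

theorem commutatorElement_mul_right_of_mem_center (hz : z ∈ Subgroup.center G) (a b : G) :
    ⁅a, z * b⁆ = ⁅a, b⁆ := by
  rw [← commutatorElement_inv, commutatorElement_mul_left_of_mem_center hz,
    commutatorElement_inv]

end Commutator

namespace Matrix

variable {ι R : Type*} [Fintype ι] [DecidableEq ι]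

theorem exists_row_ne_zero_of_mul_eq_one [Semiring R] [Nontrivial R] {A B : Matrix ι ι R}
    (h : A * B = 1) (i : ι) : ∃ j, A i j ≠ 0 := by
  by_contra! hrow
  simpa [mul_apply, hrow] using congr_fun (congr_fun h i) i

theorem exists_col_ne_zero_of_mul_eq_one [Semiring R] [Nontrivial R] {A B : Matrix ι ι R}
    (h : B * A = 1) (j : ι) : ∃ i, A i j ≠ 0 := by
  by_contra! hcol
  simpa [mul_apply, hcol] using congr_fun (congr_fun h j) j

variable (ι R) in
def diagonalUnits [Semiring R] : (ι → Rˣ) →* (Matrix ι ι R)ˣ :=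
  (Units.map (diagonalRingHom ι R).toMonoidHom).comp MulEquiv.piUnits.symm.toMonoidHom

@[simp]
theorem val_diagonalUnits [Semiring R] (d : ι → Rˣ) :
    (diagonalUnits ι R d : Matrix ι ι R) = diagonal fun i => (d i : R) :=
  rfl

end Matrix

theorem diagonal_mem_matrixGrade {Γ E ι : Type*} [AddCommGroup Γ] [Ring E] [DecidableEq ι]
    {𝒜 : Γ → AddSubgroup E} {δ : ι → Γ} {lam : Γ} {d : ι → E} (hd : ∀ i, d i ∈ 𝒜 lam) :
    Matrix.diagonal d ∈ MatrixGrade 𝒜 δ lam := by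
  intro i j
  by_cases hij : i = j
  · subst hij
    simpa using hd i
  · simp [Matrix.diagonal_apply_ne _ hij, zero_mem]

section GradedRing

variable {Γ E : Type*} [AddCommGroup Γ] [DecidableEq Γ] [Ring E]
  {𝒜 : Γ → AddSubgroup E} [GradedRing 𝒜]

theorem GradedRing.val_inv_mem {u : Eˣ} {γ : Γ} (hu : (u : E) ∈ 𝒜 γ) :
    ((u⁻¹ : Eˣ) : E) ∈ 𝒜 (-γ) := by
  have hinv : (DirectSum.decompose 𝒜 ((u⁻¹ : Eˣ) : E) (-γ) : E) * u = 1 := by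
    rw [← DirectSum.coe_decompose_mul_add_of_right_mem 𝒜 hu, Units.inv_mul, neg_add_cancel,
      DirectSum.decompose_of_mem_same 𝒜 SetLike.GradedOne.one_mem]
  exact Units.eq_inv_of_mul_eq_one_right hinv ▸ SetLike.coe_mem _

theorem GradedRing.mul_inv_mem_center_units (hE0c : ∀ x : E, x ∈ 𝒜 0 → x ∈ Set.center E)
    {γ : Γ} {u v : Eˣ} (hu : (u : E) ∈ 𝒜 γ) (hv : (v : E) ∈ 𝒜 γ) :
    u * v⁻¹ ∈ Subgroup.center Eˣ := by
  have h0 : ((u * v⁻¹ : Eˣ) : E) ∈ 𝒜 0 := by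
    simpa only [Units.val_mul, add_neg_cancel] using
      SetLike.mul_mem_graded hu (val_inv_mem hv)
  exact Set.subset_center_units (hE0c _ h0)

theorem GradedRing.exists_ne_zero_mem_sub
    (hdiv : ∀ (γ : Γ) (x : E), x ∈ 𝒜 γ → x ≠ 0 → IsUnit x) {α β : Γ} {x y : E}
    (hx : x ∈ 𝒜 α) (hx0 : x ≠ 0) (hy : y ∈ 𝒜 β) (hy0 : y ≠ 0) :
    ∃ z : E, z ≠ 0 ∧ z ∈ 𝒜 (α - β) := by
  obtain ⟨u, rfl⟩ := hdiv β y hy hy0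
  refine ⟨x * (u⁻¹ : Eˣ), (Units.mul_left_eq_zero _).not.mpr hx0, ?_⟩
  simpa only [sub_eq_add_neg] using SetLike.mul_mem_graded hx (val_inv_mem hy)

section ShiftedGrading

variable {n : ℕ} {δ : Γ} {lam : Γ} (hdiv : ∀ (γ : Γ) (x : E), x ∈ 𝒜 γ → x ≠ 0 → IsUnit x)
  (hδ : ∀ m : ℕ, 0 < m → m < 2 * n → ¬ ∃ x : E, x ≠ 0 ∧ x ∈ 𝒜 (m • δ))
include hdiv hδ

theorem add_eq_add_of_mem_matrixGrade {A : Matrix (Fin n) (Fin n) E}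
    (hA : A ∈ MatrixGrade 𝒜 (fun i : Fin n => (i : ℕ) • δ) lam) {i j i' j' : Fin n}
    (h : A i j ≠ 0) (h' : A i' j' ≠ 0) : (j : ℕ) + i' = i + j' := by
  wlog hle : (i : ℕ) + j' ≤ j + i' generalizing i j i' j'
  · have := this h' h (by omega)
    omega
  obtain ⟨m, hm⟩ : ∃ m, (j : ℕ) + i' = m + (i + j') := ⟨_, (Nat.sub_add_cancel hle).symm⟩
  by_contra hne
  refine hδ m (by omega) (by omega) ?_
  have hdeg :
      (lam + (j : ℕ) • δ - (i : ℕ) • δ) - (lam + (j' : ℕ) • δ - (i' : ℕ) • δ) = m • δ := by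
    rw [show m • δ = ((j : ℕ) + i') • δ - ((i : ℕ) + j') • δ by
      rw [hm, add_nsmul, add_sub_cancel_right]]
    simp only [add_nsmul]
    abel
  exact hdeg ▸ GradedRing.exists_ne_zero_mem_sub hdiv (hA i j) h (hA i' j') h'

theorem isDiag_of_mem_matrixGrade [Nontrivial E] {A : (Matrix (Fin n) (Fin n) E)ˣ}
    (hA : A.val ∈ MatrixGrade 𝒜 (fun i : Fin n => (i : ℕ) • δ) lam) : A.val.IsDiag := by
  intro i j hij
  by_contra h
  let o : Fin n := ⟨0, i.pos⟩
  obtain ⟨j₀, hj₀⟩ := Matrix.exists_row_ne_zero_of_mul_eq_one A.mul_inv o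
  obtain ⟨i₀, hi₀⟩ := Matrix.exists_col_ne_zero_of_mul_eq_one A.inv_mul o
  -- the diagonal through `(o, j₀)` also passes through `(i₀, o)`, so it is the main one
  have hj₀o := add_eq_add_of_mem_matrixGrade hdiv hδ hA hj₀ hi₀
  have hij' := add_eq_add_of_mem_matrixGrade hdiv hδ hA h hj₀
  exact hij (Fin.ext (by simp only [o] at hj₀o hij'; omega))

theorem exists_eq_diagonalUnits_of_mem_matrixGrade [Nontrivial E]
    {A : (Matrix (Fin n) (Fin n) E)ˣ}
    (hA : A.val ∈ MatrixGrade 𝒜 (fun i : Fin n => (i : ℕ) • δ) lam) :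
    ∃ d : Fin n → Eˣ, (∀ i, (d i : E) ∈ 𝒜 lam) ∧ A = Matrix.diagonalUnits (Fin n) E d := by
  have hdiag := isDiag_of_mem_matrixGrade hdiv hδ hA
  have hmem : ∀ i, A.val i i ∈ 𝒜 lam := fun i => by simpa using hA i i
  have hne : ∀ i, A.val i i ≠ 0 := fun i => by
    obtain ⟨j, hj⟩ := Matrix.exists_row_ne_zero_of_mul_eq_one A.mul_inv i
    by_cases hij : i = j
    · exact hij ▸ hj
    · exact absurd (hdiag hij) hj
  refine ⟨fun i => (hdiv _ _ (hmem i) (hne i)).unit, hmem, Units.ext ?_⟩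
  rw [Matrix.val_diagonalUnits]
  simp only [IsUnit.unit_spec]
  exact ((Matrix.isDiag_iff_diagonal_diag A.val).mp hdiag).symm

end ShiftedGrading

theorem commutatorElement_diagonalUnits (hE0c : ∀ x : E, x ∈ 𝒜 0 → x ∈ Set.center E)
    {ι : Type*} [Fintype ι] [DecidableEq ι] {α β : Γ} {p q : ι → Eˣ}
    (hp : ∀ i, (p i : E) ∈ 𝒜 α) (hq : ∀ i, (q i : E) ∈ 𝒜 β) (o : ι) :
    ⁅Matrix.diagonalUnits ι E p, Matrix.diagonalUnits ι E q⁆ =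
      Matrix.diagonalUnits ι E (fun _ => ⁅p o, q o⁆) := by
  rw [← map_commutatorElement]
  congr 1
  funext i
  calc ⁅p i, q i⁆ = ⁅p i * (p o)⁻¹ * p o, q i * (q o)⁻¹ * q o⁆ := by
        simp only [inv_mul_cancel_right]
    _ = ⁅p o, q o⁆ := by
      rw [commutatorElement_mul_left_of_mem_center
          (GradedRing.mul_inv_mem_center_units hE0c (hp i) (hp o)),
        commutatorElement_mul_right_of_mem_center
          (GradedRing.mul_inv_mem_center_units hE0c (hq i) (hq o))]

end GradedRing

theorem commutator_subgroup_of_shifted_matrix_units_general {Γ E : Type*} [AddCommGroup Γ]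
    [DecidableEq Γ] [Ring E] [Nontrivial E] (𝒜 : Γ → AddSubgroup E) [GradedRing 𝒜]
    (hdiv : ∀ (γ : Γ) (x : E), x ∈ 𝒜 γ → x ≠ 0 → IsUnit x)
    -- `E₀` is contained in the center of `E`
    (hE0c : ∀ x : E, x ∈ 𝒜 (0 : Γ) → x ∈ Set.center E)
    {n : ℕ} (hn : 1 < n) (δ : Γ)
    -- the order of `δ + Γ_E` in `Γ/Γ_E` exceeds `3n` (possibly infinite)
    (horder : ∀ m : ℕ, 1 ≤ m → m ≤ 3 * n → ¬ ∃ x : E, x ≠ 0 ∧ x ∈ 𝒜 (m • δ))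
    -- `E_h*`, the group of homogeneous units of `E`
    (Eh : Subgroup Eˣ) (hEh : ∀ u : Eˣ, u ∈ Eh ↔ ∃ γ : Γ, u.val ∈ 𝒜 γ)
    -- `S_h*`, the group of homogeneous units of `S = Mₙ(E)(0, δ, …, (n-1)δ)`
    (Sh : Subgroup (Matrix (Fin n) (Fin n) E)ˣ)
    (hSh : ∀ A : (Matrix (Fin n) (Fin n) E)ˣ,
      A ∈ Sh ↔ ∃ lam, A.val ∈ MatrixGrade 𝒜 (fun i : Fin n => (i : ℕ) • δ) lam) :
    ∀ A : (Matrix (Fin n) (Fin n) E)ˣ,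
      A ∈ ⁅Sh, Sh⁆ ↔
      ∃ c : Eˣ, c ∈ ⁅Eh, Eh⁆ ∧
        A.val = c.val • (1 : Matrix (Fin n) (Fin n) E) := by
  intro A
  have hδ : ∀ m : ℕ, 0 < m → m < 2 * n → ¬ ∃ x : E, x ≠ 0 ∧ x ∈ 𝒜 (m • δ) :=
    fun m hm hm' => horder m hm (by omega)
  let φ : Eˣ →* (Matrix (Fin n) (Fin n) E)ˣ :=
    (Matrix.diagonalUnits (Fin n) E).comp (Pi.constMonoidHom (Fin n) Eˣ)
  have hφ : ∀ c, (φ c).val = c.val • (1 : Matrix (Fin n) (Fin n) E) :=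
    fun c => (Matrix.smul_one_eq_diagonal c.val).symm
  have hmap : Eh.map φ ≤ Sh := by
    rintro _ ⟨c, hc, rfl⟩
    obtain ⟨γ, hγ⟩ := (hEh c).mp hc
    exact (hSh _).mpr ⟨γ, diagonal_mem_matrixGrade fun _ => hγ⟩
  have hcomm : ∀ P ∈ Sh, ∀ Q ∈ Sh, ⁅P, Q⁆ ∈ ⁅Eh, Eh⁆.map φ := by
    intro P hP Q hQ
    obtain ⟨α, hα⟩ := (hSh P).mp hP
    obtain ⟨β, hβ⟩ := (hSh Q).mp hQ
    obtain ⟨p, hp, rfl⟩ := exists_eq_diagonalUnits_of_mem_matrixGrade hdiv hδ hα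
    obtain ⟨q, hq, rfl⟩ := exists_eq_diagonalUnits_of_mem_matrixGrade hdiv hδ hβ
    let o : Fin n := ⟨0, by omega⟩
    refine ⟨⁅p o, q o⁆, ?_, (commutatorElement_diagonalUnits hE0c hp hq o).symm⟩
    exact Subgroup.commutator_mem_commutator ((hEh _).mpr ⟨α, hp o⟩) ((hEh _).mpr ⟨β, hq o⟩)
  constructor
  · intro hA
    obtain ⟨c, hc, rfl⟩ := Subgroup.commutator_le.mpr hcomm hA
    exact ⟨c, hc, hφ c⟩
  · rintro ⟨c, hc, hAc⟩
    obtain rfl : A = φ c := Units.ext (hAc.trans (hφ c).symm)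
    have hle : ⁅Eh, Eh⁆.map φ ≤ ⁅Sh, Sh⁆ := by
      rw [Subgroup.map_commutator]
      exact Subgroup.commutator_mono hmap hmap
    exact hle ⟨c, hc, rfl⟩

/-- let `Γ` be a torsion-free abelian group, `E` a `Γ`-graded
division ring with `E₀ ⊆ Z(E)`, `n > 1`, and `δ ∈ Γ` whose coset `δ + Γ_E` has order
`> 3n` (possibly infinite) in `Γ/Γ_E`.  Let `S = Mₙ(E)(δ̄)` with
`δ̄ = (0, δ, 2δ, …, (n-1)δ)`.  Then
`[S_h*, S_h*] = {c·𝕀ₙ : c ∈ [E_h*, E_h*]}`. -/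
theorem commutator_subgroup_of_shifted_matrix_units {Γ E : Type*} [AddCommGroup Γ]
    [DecidableEq Γ] [Ring E] [Nontrivial E] (𝒜 : Γ → AddSubgroup E) [GradedRing 𝒜]
    (hdiv : ∀ (γ : Γ) (x : E), x ∈ 𝒜 γ → x ≠ 0 → IsUnit x)
    -- `Γ` is torsion-free
    (htf : ∀ (γ : Γ) (m : ℕ), m ≠ 0 → m • γ = 0 → γ = 0)
    -- `E₀` is contained in the center of `E`
    (hE0c : ∀ x : E, x ∈ 𝒜 (0 : Γ) → x ∈ Set.center E)
    {n : ℕ} (hn : 1 < n) (δ : Γ)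
    -- the order of `δ + Γ_E` in `Γ/Γ_E` exceeds `3n` (possibly infinite)
    (horder : ∀ m : ℕ, 1 ≤ m → m ≤ 3 * n → ¬ ∃ x : E, x ≠ 0 ∧ x ∈ 𝒜 (m • δ))
    -- `E_h*`, the group of homogeneous units of `E`
    (Eh : Subgroup Eˣ) (hEh : ∀ u : Eˣ, u ∈ Eh ↔ ∃ γ : Γ, u.val ∈ 𝒜 γ)
    -- `S_h*`, the group of homogeneous units of `S = Mₙ(E)(0, δ, …, (n-1)δ)`
    (Sh : Subgroup (Matrix (Fin n) (Fin n) E)ˣ)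
    (hSh : ∀ A : (Matrix (Fin n) (Fin n) E)ˣ,
      A ∈ Sh ↔ ∃ lam, A.val ∈ MatrixGrade 𝒜 (fun i : Fin n => (i : ℕ) • δ) lam) :
    ∀ A : (Matrix (Fin n) (Fin n) E)ˣ,
      A ∈ ⁅Sh, Sh⁆ ↔
      ∃ c : Eˣ, c ∈ ⁅Eh, Eh⁆ ∧
        A.val = c.val • (1 : Matrix (Fin n) (Fin n) E) :=
  commutator_subgroup_of_shifted_matrix_units_general 𝒜 hdiv hE0c hn δ horder Eh hEh Sh hSh
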